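/- Let b ∈ L be a primitive element, i.e. L = k(b), and let D_b := diag(b, g(b), g²(b)). Then the nine matrices D_b^i · A_g^j for i, j ∈ {0, 1, 2} form a basis of Mat₃(L) as an L-vector space (they are L-linearly independent and span Mat₃(L)). -/

import Mathlib

/-!
A relation `∑ c i j • D ^ i * A ^ j = 0` read at the entry `(r, r - j)`, the only place where
`A ^ j` is nonzero in row `r` while the other two powers of `A` vanish, says that the
polynomial `∑ i, c i j X ^ i` of degree `< 3` vanishes at the three diagonal entries of `D`.
These are the Galois conjugates `b, g b, g² b`, which are distinct because `b` is primitive and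
`g` has order `3`, so the Vandermonde determinant forces every `c i j` to vanish. Nine
independent vectors span the nine-dimensional space `Mat₃(L)`.
-/

open Matrix IntermediateField

theorem AlgEquiv.apply_injective_of_adjoin_simple_eq_top {k L : Type*} [Field k] [Field L]
    [Algebra k L] {b : L} (hb : adjoin k {b} = ⊤) :
    Function.Injective fun σ : L ≃ₐ[k] L => σ b := by
  intro σ τ hστ
  have hfix : τ⁻¹ * σ ∈ MulAction.stabilizer (L ≃ₐ[k] L) b := by
    simp [MulAction.mem_stabilizer_iff, AlgEquiv.smul_def, AlgEquiv.mul_apply, hστ]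
  have hle : MulAction.stabilizer (L ≃ₐ[k] L) b ≤ fixingSubgroup (⊤ : IntermediateField k L) := by
    rw [← hb, ← le_iff_le, adjoin_simple_le_iff]
    exact fun σ => σ.2
  simpa [inv_mul_eq_one, eq_comm] using hle hfix

theorem AlgEquiv.pow_apply_injective_of_adjoin_simple_eq_top {k L : Type*} [Field k] [Field L]
    [Algebra k L] {b : L} (hb : adjoin k {b} = ⊤) (g : L ≃ₐ[k] L) {n : ℕ} (hn : n ≤ orderOf g) :
    Function.Injective fun r : Fin n => (g ^ (r : ℕ)) b := fun r s hrs =>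
  Fin.ext <| pow_injOn_Iio_orderOf (by simp; omega) (by simp; omega)
    (AlgEquiv.apply_injective_of_adjoin_simple_eq_top hb hrs)

theorem Matrix.linearIndependent_diagonal_pow_mul {K : Type*} [Field K] {n m : ℕ}
    {d : Fin n → K} (hd : Function.Injective d) {M : Fin m → Matrix (Fin n) (Fin n) K}
    (hM : ∀ j r, ∃ s, M j r s ≠ 0 ∧ ∀ j', j' ≠ j → M j' r s = 0) :
    LinearIndependent K fun p : Fin n × Fin m => diagonal d ^ (p.1 : ℕ) * M p.2 := by
  rw [Fintype.linearIndependent_iff]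
  rintro c hc ⟨i, j⟩
  suffices hroots : ∀ r, ∑ i : Fin n, c (i, j) * d r ^ (i : ℕ) = 0 from
    congrFun (eq_zero_of_forall_index_sum_mul_pow_eq_zero hd hroots) i
  intro r
  obtain ⟨s, hs, hother⟩ := hM j r
  have hentry := congrFun (congrFun hc r) s
  simp only [Fintype.sum_prod_type, Matrix.sum_apply, Matrix.smul_apply, diagonal_pow,
    diagonal_mul, Pi.pow_apply, smul_eq_mul, Matrix.zero_apply] at hentry
  rw [Finset.sum_congr rfl fun i _ => Finset.sum_eq_single j (fun j' _ hj' => by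
    rw [hother j' hj', mul_zero, mul_zero]) (by simp)] at hentry
  simp_rw [← mul_assoc, ← Finset.sum_mul] at hentry
  exact (mul_eq_zero.mp hentry).resolve_right hs

theorem exists_pow_shift_apply_ne_zero {K : Type*} [Field K] {q : K} (hq : q ≠ 0) (j r : Fin 3) :
    ∃ s, (!![0, 0, q; 1, 0, 0; 0, 1, 0] ^ (j : ℕ)) r s ≠ 0 ∧
      ∀ j' : Fin 3, j' ≠ j → (!![0, 0, q; 1, 0, 0; 0, 1, 0] ^ (j' : ℕ)) r s = 0 := by
  have hsq : (!![0, 0, q; 1, 0, 0; 0, 1, 0] : Matrix (Fin 3) (Fin 3) K) ^ 2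
      = !![0, q, 0; 0, 0, q; 1, 0, 0] := by
    simp [sq]
  refine ⟨r - j, ?_, fun j' hj' => ?_⟩ <;> fin_cases j <;> fin_cases r <;> try fin_cases j'
  all_goals simp_all

theorem stmt_6 (k L : Type*) [Field k] [Field L] [Algebra k L] [IsGalois k L]
    (hdeg : Module.finrank k L = 3)
    (g : L ≃ₐ[k] L) (hg : ∀ σ : L ≃ₐ[k] L, σ ∈ Subgroup.zpowers g)
    (ξ : k) (hξ : ξ ≠ 0)
    (b : L) (hb : IntermediateField.adjoin k {b} = ⊤) :
    LinearIndependent L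
        (fun p : Fin 3 × Fin 3 =>
          (Matrix.diagonal ![b, g b, g (g b)]) ^ (p.1 : ℕ) *
            (!![0, 0, algebraMap k L ξ; 1, 0, 0; 0, 1, 0]) ^ (p.2 : ℕ)) ∧
      Submodule.span L
          (Set.range fun p : Fin 3 × Fin 3 =>
            (Matrix.diagonal ![b, g b, g (g b)]) ^ (p.1 : ℕ) *
              (!![0, 0, algebraMap k L ξ; 1, 0, 0; 0, 1, 0]) ^ (p.2 : ℕ)) = ⊤ := by
  have : FiniteDimensional k L := .of_finrank_pos (by omega)
  have horder : orderOf g = 3 := by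
    rw [orderOf_eq_card_of_forall_mem_zpowers hg, IsGalois.card_aut_eq_finrank, hdeg]
  have hconj : ![b, g b, g (g b)] = fun r : Fin 3 => (g ^ (r : ℕ)) b := by
    ext r; fin_cases r <;> simp [pow_succ]
  rw [hconj]
  have hli := linearIndependent_diagonal_pow_mul
    (M := fun j : Fin 3 => !![0, 0, algebraMap k L ξ; 1, 0, 0; 0, 1, 0] ^ (j : ℕ))
    (AlgEquiv.pow_apply_injective_of_adjoin_simple_eq_top hb g horder.ge)
    (exists_pow_shift_apply_ne_zero ((map_ne_zero (algebraMap k L)).mpr hξ))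
  exact ⟨hli, hli.span_eq_top_of_card_eq_finrank (by simp [Module.finrank_matrix])⟩
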